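/- arXiv:0707.4596 — 2 statements merged into one kernel-verified Lean document; each statement's English description precedes it below -/
import Mathlib

section
/- Under the assumptions of the lattice-case uniform exact LDP (in particular Y is lattice-valued with span d, the law of X has a subcomponent with a density, Pr{sup_n Σ_{i=1}^n X_i = ∞} = 1, and condition (1.24) holds), for all sufficiently large x the random variable W(x) is lattice-valued with span d. -/
open MeasureTheory ProbabilityTheory Real Set Filter Asymptotics
open scoped ENNReal

noncomputable section

/-- `N(x)`: the largest `n` such that all partial sums `X_1 + ⋯ + X_k`, `k ≤ n`, are `≤ x`
(interpreted via `sSup`; it equals `0` if `X_1 > x`). -/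
def NN {Ω : Type} (Xn : ℕ → Ω → ℝ) (x : ℝ) (ω : Ω) : ℕ :=
  sSup {n : ℕ | ∀ k ≤ n, ∑ i ∈ Finset.range k, Xn i ω ≤ x}

/-- `W(x) = Y_1 + ⋯ + Y_{N(x)}`, the renewal reward process. -/
def WW {Ω : Type} (Xn Yn : ℕ → Ω → ℝ) (x : ℝ) (ω : Ω) : ℝ :=
  ∑ i ∈ Finset.range (NN Xn x ω), Yn i ω

/-- `M_x(t) = E[e^{t W(x)}]`, as an extended-real valued integral. -/
def MgfW {Ω : Type} [MeasurableSpace Ω] (P : Measure Ω) (Xn Yn : ℕ → Ω → ℝ) (x t : ℝ) : ℝ≥0∞ :=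
  ∫⁻ ω, ENNReal.ofReal (Real.exp (t * WW Xn Yn x ω)) ∂P

/-- `𝓓_t = {s : E[e^{tY - sX}] ≤ 1}`. -/
def Dset {Ω : Type} [MeasurableSpace Ω] (P : Measure Ω) (X Y : Ω → ℝ) (t : ℝ) : Set ℝ :=
  {s : ℝ | ∫⁻ ω, ENNReal.ofReal (Real.exp (t * Y ω - s * X ω)) ∂P ≤ 1}

/-- `h(t) = inf 𝓓_t`. -/
def hfun {Ω : Type} [MeasurableSpace Ω] (P : Measure Ω) (X Y : Ω → ℝ) (t : ℝ) : ℝ :=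
  sInf (Dset P X Y t)

/-- `h*(ν) = sup_t (νt - h(t))`, the convex conjugate of `h`. -/
def hstar {Ω : Type} [MeasurableSpace Ω] (P : Measure Ω) (X Y : Ω → ℝ) (ν : ℝ) : ℝ :=
  ⨆ t : ℝ, (ν * t - hfun P X Y t)

/-- `β_X = limsup_{x → ∞} (1/x) log Pr{X > x}`, as an extended real number. -/
def betaX {Ω : Type} [MeasurableSpace Ω] (P : Measure Ω) (X : Ω → ℝ) : EReal :=
  Filter.limsup (fun x : ℝ => ((Real.log (P {ω | x < X ω}).toReal / x : ℝ) : EReal)) Filter.atTop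

/-- The (topological) support of a measure on `ℝ`. -/
def msupport (μ : Measure ℝ) : Set ℝ := {x | ∀ U ∈ nhds x, 0 < μ U}

/-- `B(X,t)` of the paper. -/
def Bfun {Ω : Type} [MeasurableSpace Ω] (P : Measure Ω) (X Y : Ω → ℝ)
    (Xn Yn : ℕ → Ω → ℝ) (g : ℝ → ℝ → ℝ) (t : ℝ) : ℝ :=
  (∫ x in Set.Ioi (0:ℝ), Real.exp (-(hfun P X Y t) * x) * (P {ω | x < X ω}).toReal) -
  (∫ x in Set.Iio (0:ℝ),
      (∫ u in Set.Ioo (0:ℝ) |x|,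
        g t x * (MgfW P Xn Yn u t).toReal * Real.exp (-(hfun P X Y t) * (x + u)))
    ∂(Measure.map X P))

/-- `φ(t) = B(X,t) / E[X e^{tY - h(t)X}]` of the paper. -/
def phifun {Ω : Type} [MeasurableSpace Ω] (P : Measure Ω) (X Y : Ω → ℝ)
    (Xn Yn : ℕ → Ω → ℝ) (g : ℝ → ℝ → ℝ) (t : ℝ) : ℝ :=
  Bfun P X Y Xn Yn g t / ∫ ω, X ω * Real.exp (t * Y ω - hfun P X Y t * X ω) ∂P

/-- A real random variable `ξ` is lattice valued with span `d`:
`d = max{t > 0 : Pr{ξ ∈ tℤ} = 1}`. -/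
def HasSpan {Ω : Type} [MeasurableSpace Ω] (P : Measure Ω) (ξ : Ω → ℝ) (d : ℝ) : Prop :=
  0 < d ∧ P {ω | ∃ m : ℤ, ξ ω = d * m} = 1 ∧
    ∀ t > (0:ℝ), P {ω | ∃ m : ℤ, ξ ω = t * m} = 1 → t ≤ d

open scoped Topology

/-!
`W(x) ∈ dℤ` because every `Y_i` is. If `W(x)` also lived in `tℤ` for some `t > d`, it would live
in `(m d)ℤ` for some `m ≥ 2`, so `e^{isW(x)} = 1` for `s = 2π⌊m/2⌋/(m d)`, a point of the fixed
interval `[2π/(3d), π/d]`.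

Renew at time `k`: on the event `A_x = {S_1, …, S_k ≤ x}` one has
`W(x) = S^Y_k + W'(x - S^X_k)`, where `W'` is built from the increments after time `k`, which are
independent of the first `k`. So on `A_x` the phase `e^{isS^Y_k}` is a function of `S^X_k` and of
an independent sequence; freezing that sequence gives
`E |E[e^{isS^Y_k} | S^X_k]| ≥ 1 - 2 P(A_xᶜ)`. The left side is continuous in `s` and `< 1` by
(1.24), hence bounded by some `c < 1` on the interval, while `P(A_xᶜ) → 0` as `x → ∞`.
-/

lemma IsLowerSet.nat_sSup_eq {s : Set ℕ} (hs : IsLowerSet s) {n : ℕ} (hn : n ∈ s)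
    (hn1 : n + 1 ∉ s) : sSup s = n := by
  have hub : n ∈ upperBounds s := fun m hm => by
    by_contra! h
    exact hn1 (hs h hm)
  exact le_antisymm (csSup_le ⟨n, hn⟩ hub) (le_csSup ⟨n, hub⟩ hn)

lemma IsLowerSet.nat_sSup_eq_succ_iff {s : Set ℕ} (hs : IsLowerSet s) {n : ℕ} :
    sSup s = n + 1 ↔ n + 1 ∈ s ∧ n + 2 ∉ s := by
  refine ⟨fun h => ?_, fun h => hs.nat_sSup_eq h.1 h.2⟩
  have hbdd : BddAbove s := by
    by_contra hb
    simp [csSup_of_not_bddAbove hb] at h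
  have hne : s.Nonempty := by
    by_contra hne
    simp [Set.not_nonempty_iff_eq_empty.1 hne] at h
  exact ⟨h ▸ Nat.sSup_mem hne hbdd, fun h2 => by have := le_csSup hbdd h2; omega⟩

section Renewal

variable {Ω : Type} {Xn Yn : ℕ → Ω → ℝ}

lemma isLowerSet_setOf_forall_sum_le (x : ℝ) (ω : Ω) :
    IsLowerSet {n : ℕ | ∀ k ≤ n, ∑ i ∈ Finset.range k, Xn i ω ≤ x} :=
  fun _ _ hba ha k hk => ha k (hk.trans hba)

lemma NN_eq_add_NN_shift {x : ℝ} {ω : Ω} {k : ℕ}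
    (hk : ∀ j ≤ k, ∑ i ∈ Finset.range j, Xn i ω ≤ x)
    (hexit : ∃ n, x < ∑ i ∈ Finset.range n, Xn i ω) :
    NN Xn x ω = k + NN (fun i => Xn (k + i)) (x - ∑ i ∈ Finset.range k, Xn i ω) ω := by
  set s := {n : ℕ | ∀ j ≤ n, ∑ i ∈ Finset.range j, Xn i ω ≤ x}
  have hshift : ∀ m, k + m ∈ s ↔
      ∀ j ≤ m, ∑ i ∈ Finset.range j, Xn (k + i) ω ≤ x - ∑ i ∈ Finset.range k, Xn i ω := by
    refine fun m => ⟨fun h j hj => ?_, fun h j hj => ?_⟩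
    · have := h (k + j) (by omega)
      rw [Finset.sum_range_add] at this
      linarith
    · rcases le_or_gt j k with hjk | hjk
      · exact hk j hjk
      · obtain ⟨j, rfl⟩ := Nat.exists_eq_add_of_le hjk.le
        have := h j (by omega)
        rw [Finset.sum_range_add]
        linarith
  obtain ⟨n₀, hn₀⟩ := hexit
  have hbdd : BddAbove s := ⟨n₀, fun n hn => by
    by_contra! h
    exact (hn n₀ h.le).not_gt hn₀⟩
  have hks : k ∈ s := hk
  have hN : NN Xn x ω ∈ s := Nat.sSup_mem ⟨k, hks⟩ hbdd
  have hN1 : NN Xn x ω + 1 ∉ s := fun h => by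
    have : NN Xn x ω + 1 ≤ NN Xn x ω := le_csSup hbdd h
    omega
  obtain ⟨m, hm⟩ : ∃ m, NN Xn x ω = k + m := Nat.exists_eq_add_of_le (le_csSup hbdd hks)
  rw [hm] at hN hN1 ⊢
  rw [NN, (isLowerSet_setOf_forall_sum_le _ ω).nat_sSup_eq ((hshift m).1 hN)
    (by rwa [Set.mem_ofPred_eq, ← hshift, ← add_assoc])]

def pathWW (x : ℝ) (g : ℕ → ℝ × ℝ) : ℝ :=
  WW (fun i g => (g i).1) (fun i g => (g i).2) x g

lemma WW_eq_add_pathWW {x : ℝ} {ω : Ω} {k : ℕ}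
    (hk : ∀ j ≤ k, ∑ i ∈ Finset.range j, Xn i ω ≤ x)
    (hexit : ∃ n, x < ∑ i ∈ Finset.range n, Xn i ω) :
    WW Xn Yn x ω = ∑ i ∈ Finset.range k, Yn i ω +
      pathWW (x - ∑ i ∈ Finset.range k, Xn i ω) (fun i => (Xn (k + i) ω, Yn (k + i) ω)) := by
  rw [WW, pathWW, WW, NN_eq_add_NN_shift hk hexit, Finset.sum_range_add]
  rfl

variable [MeasurableSpace Ω]

lemma measurableSet_setOf_forall_sum_le (hXn : ∀ i, Measurable (Xn i)) (n : ℕ) :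
    MeasurableSet {p : ℝ × Ω | ∀ j ≤ n, ∑ i ∈ Finset.range j, Xn i p.2 ≤ p.1} := by
  simp only [Set.ofPred_forall]
  exact .iInter fun j => .iInter fun _ =>
    measurableSet_le (Finset.measurable_sum _ fun i _ => (hXn i).comp measurable_snd) measurable_fst

lemma measurable_NN_uncurry (hXn : ∀ i, Measurable (Xn i)) :
    Measurable (fun p : ℝ × Ω => NN Xn p.1 p.2) := by
  have hsucc : ∀ n, (fun p : ℝ × Ω => NN Xn p.1 p.2) ⁻¹' {n + 1} =
      {p | ∀ j ≤ n + 1, ∑ i ∈ Finset.range j, Xn i p.2 ≤ p.1} \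
        {p | ∀ j ≤ n + 2, ∑ i ∈ Finset.range j, Xn i p.2 ≤ p.1} := fun n => by
    ext p
    exact (isLowerSet_setOf_forall_sum_le p.1 p.2).nat_sSup_eq_succ_iff
  have hmeas : ∀ n, MeasurableSet ((fun p : ℝ × Ω => NN Xn p.1 p.2) ⁻¹' {n + 1}) := fun n => by
    rw [hsucc]
    exact (measurableSet_setOf_forall_sum_le hXn _).diff (measurableSet_setOf_forall_sum_le hXn _)
  refine measurable_to_countable' fun n => ?_
  rcases n with _ | n
  · have hzero : (fun p : ℝ × Ω => NN Xn p.1 p.2) ⁻¹' {0} =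
        (⋃ n, (fun p : ℝ × Ω => NN Xn p.1 p.2) ⁻¹' {n + 1})ᶜ := by
      ext p
      simp only [Set.mem_preimage, Set.mem_singleton_iff, Set.mem_compl_iff, Set.mem_iUnion,
        not_exists]
      exact ⟨fun h n => by omega,
        fun h => by by_contra h0; exact h _ (Nat.succ_pred_eq_of_ne_zero h0).symm⟩
    rw [hzero]
    exact (MeasurableSet.iUnion hmeas).compl
  · exact hmeas n

lemma measurable_WW_uncurry (hXn : ∀ i, Measurable (Xn i)) (hYn : ∀ i, Measurable (Yn i)) :
    Measurable (fun p : ℝ × Ω => WW Xn Yn p.1 p.2) := by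
  have hsum : Measurable (fun q : Ω × ℕ => ∑ i ∈ Finset.range q.2, Yn i q.1) :=
    measurable_from_prod_countable_left fun n =>
      Finset.measurable_sum (Finset.range n) fun i _ => hYn i
  exact hsum.comp (measurable_snd.prodMk (measurable_NN_uncurry hXn))

lemma measurable_WW (hXn : ∀ i, Measurable (Xn i)) (hYn : ∀ i, Measurable (Yn i)) (x : ℝ) :
    Measurable (WW Xn Yn x) :=
  (measurable_WW_uncurry hXn hYn).comp (f := fun ω => (x, ω)) (by fun_prop)

end Renewal

@[fun_prop]
lemma Measurable.pathWW {α : Type*} [MeasurableSpace α] {f : α → ℝ} {g : α → ℕ → ℝ × ℝ}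
    (hf : Measurable f) (hg : Measurable g) : Measurable fun a => pathWW (f a) (g a) := by
  simpa only [Function.comp_def, _root_.pathWW] using
    (measurable_WW_uncurry (fun i => (measurable_pi_apply i).fst)
      (fun i => (measurable_pi_apply i).snd)).comp (hf.prodMk hg)

lemma mem_zmultiples_iff_exists_eq_mul {d w : ℝ} :
    w ∈ AddSubgroup.zmultiples d ↔ ∃ m : ℤ, w = d * m := by
  simp only [AddSubgroup.mem_zmultiples_iff, zsmul_eq_mul, eq_comm, mul_comm]

lemma measurableSet_zmultiples (d : ℝ) : MeasurableSet (AddSubgroup.zmultiples d : Set ℝ) :=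
  (Set.countable_range fun n : ℤ => n • d).measurableSet

lemma exists_two_le_inf_zmultiples_le {d t : ℝ} (hd : 0 < d) (hdt : d < t) :
    ∃ m : ℕ, 2 ≤ m ∧
      AddSubgroup.zmultiples d ⊓ AddSubgroup.zmultiples t ≤ AddSubgroup.zmultiples (m * d) := by
  -- `{z : ℤ | z • d ∈ tℤ}` is a subgroup `aℤ` of `ℤ`, and `|a| ≠ 1` because `0 < d < t`.
  obtain ⟨a, ha⟩ := Int.subgroup_cyclic ((AddSubgroup.zmultiples t).comap (zmultiplesHom ℝ d))
  rw [← AddSubgroup.zmultiples_eq_closure, ← Int.zmultiples_natAbs] at ha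
  have hle : ∀ w ∈ AddSubgroup.zmultiples d ⊓ AddSubgroup.zmultiples t,
      w ∈ AddSubgroup.zmultiples ((a.natAbs : ℝ) * d) := by
    rintro w ⟨⟨z, rfl⟩, hwt⟩
    have hz : z ∈ AddSubgroup.zmultiples (a.natAbs : ℤ) := by
      rw [← ha]
      exact hwt
    obtain ⟨q, rfl⟩ := hz
    exact ⟨q, by simp [mul_smul, ← mul_assoc, zsmul_eq_mul]⟩
  rcases hn : a.natAbs with _ | _ | n
  · refine ⟨2, le_rfl, fun w hw => ?_⟩
    have hw0 : w = 0 := by simpa [hn] using hle w hw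
    exact hw0 ▸ zero_mem _
  · exfalso
    have h1 : (1 : ℤ) ∈ AddSubgroup.zmultiples (a.natAbs : ℤ) := by simp [hn]
    rw [← ha] at h1
    obtain ⟨q, hq⟩ := mem_zmultiples_iff_exists_eq_mul.1 h1
    simp only [zmultiplesHom_apply, one_smul] at hq
    rcases le_or_gt q 0 with hq0 | hq0
    · have : (q : ℝ) ≤ 0 := by exact_mod_cast hq0
      nlinarith
    · have : (1 : ℝ) ≤ q := by exact_mod_cast hq0
      nlinarith
  · refine ⟨n + 1 + 1, by omega, ?_⟩
    rw [← hn]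
    exact hle

lemma exists_mem_Icc_forall_exp_eq_one {d t : ℝ} (hd : 0 < d) (hdt : d < t) :
    ∃ s ∈ Icc (2 * π / (3 * d)) (π / d), ∀ w ∈ AddSubgroup.zmultiples d ⊓ AddSubgroup.zmultiples t,
      Complex.exp (Complex.I * s * w) = 1 := by
  obtain ⟨m, hm, hle⟩ := exists_two_le_inf_zmultiples_le hd hdt
  obtain ⟨j, hj, hjm, hmj⟩ : ∃ j : ℕ, 0 < j ∧ m ≤ 3 * j ∧ 2 * j ≤ m :=
    ⟨m / 2, by omega, by omega, by omega⟩
  have hm0 : (0 : ℝ) < m := by positivity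
  have hjm' : (m : ℝ) ≤ 3 * j := by exact_mod_cast hjm
  have hmj' : 2 * (j : ℝ) ≤ m := by exact_mod_cast hmj
  refine ⟨2 * π * j / (m * d), ⟨?_, ?_⟩, fun w hw => ?_⟩
  · rw [div_le_div_iff₀ (by positivity) (by positivity)]
    nlinarith [mul_le_mul_of_nonneg_left hjm' (by positivity : (0 : ℝ) ≤ 2 * π * d)]
  · rw [div_le_div_iff₀ (by positivity) hd]
    nlinarith [mul_le_mul_of_nonneg_left hmj' (by positivity : (0 : ℝ) ≤ π * d)]
  · obtain ⟨q, rfl⟩ := hle hw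
    have hd' : (d : ℂ) ≠ 0 := by exact_mod_cast hd.ne'
    have hm' : (m : ℂ) ≠ 0 := by exact_mod_cast hm0.ne'
    convert Complex.exp_int_mul_two_pi_mul_I (j * q) using 2
    push_cast
    field_simp
    ring

section ConditionalExpectation

variable {Ω E : Type*} {m mΩ : MeasurableSpace Ω} {μ : Measure Ω}
  [NormedAddCommGroup E] [NormedSpace ℝ E] [CompleteSpace E]

lemma abs_integral_norm_condExp_sub_le {f g : Ω → E} (hf : Integrable f μ)
    (hg : Integrable g μ) :
    |∫ ω, ‖μ[f|m] ω‖ ∂μ - ∫ ω, ‖μ[g|m] ω‖ ∂μ| ≤ ∫ ω, ‖f ω - g ω‖ ∂μ :=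
  calc |∫ ω, ‖μ[f|m] ω‖ ∂μ - ∫ ω, ‖μ[g|m] ω‖ ∂μ|
      = |∫ ω, (‖μ[f|m] ω‖ - ‖μ[g|m] ω‖) ∂μ| := by
        rw [integral_sub integrable_condExp.norm integrable_condExp.norm]
    _ ≤ ∫ ω, |‖μ[f|m] ω‖ - ‖μ[g|m] ω‖| ∂μ := abs_integral_le_integral_abs
    _ ≤ ∫ ω, ‖μ[f - g|m] ω‖ ∂μ := by
        refine integral_mono_ae (integrable_condExp.norm.sub integrable_condExp.norm).abs
          integrable_condExp.norm ?_
        filter_upwards [condExp_sub hf hg m] with ω hω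
        rw [hω]
        exact abs_norm_sub_norm_le _ _
    _ ≤ ∫ ω, ‖f ω - g ω‖ ∂μ := integral_norm_condExp_le _

lemma norm_integral_mul_le_integral_norm_condExp [IsFiniteMeasure μ] (hm : m ≤ mΩ)
    {c Z : Ω → ℂ} (hc : StronglyMeasurable[m] c) (hc1 : ∀ ω, ‖c ω‖ ≤ 1)
    (hZ : Integrable Z μ) :
    ‖∫ ω, c ω * Z ω ∂μ‖ ≤ ∫ ω, ‖μ[Z|m] ω‖ ∂μ := by
  have hcZ : Integrable (fun ω => c ω * Z ω) μ :=
    hZ.bdd_mul (hc.mono hm).aestronglyMeasurable (ae_of_all _ hc1)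
  have hpull : μ[fun ω => c ω * Z ω|m] =ᵐ[μ] fun ω => c ω * μ[Z|m] ω :=
    condExp_bilin_of_stronglyMeasurable_left (ContinuousLinearMap.mul ℝ ℂ) hc hcZ hZ
  calc ‖∫ ω, c ω * Z ω ∂μ‖ = ‖∫ ω, c ω * μ[Z|m] ω ∂μ‖ := by
        rw [← integral_condExp hm, integral_congr_ae hpull]
    _ ≤ ∫ ω, ‖c ω * μ[Z|m] ω‖ ∂μ := norm_integral_le_integral_norm _
    _ ≤ ∫ ω, ‖μ[Z|m] ω‖ ∂μ := by
        refine integral_mono_of_nonneg (ae_of_all _ fun _ => norm_nonneg _)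
          integrable_condExp.norm (ae_of_all _ fun ω => ?_)
        exact (norm_mul_le _ _).trans (mul_le_of_le_one_left (norm_nonneg _) (hc1 ω))

end ConditionalExpectation

lemma ProbabilityTheory.IndepFun.integral_comp_prodMk {Ω α β E : Type*} [MeasurableSpace Ω]
    [MeasurableSpace α] [MeasurableSpace β] [NormedAddCommGroup E] [NormedSpace ℝ E]
    {μ : Measure Ω} [IsFiniteMeasure μ] {U : Ω → α} {G : Ω → β} (hUG : IndepFun U G μ)
    (hU : AEMeasurable U μ) (hG : AEMeasurable G μ) {h : α × β → E}
    (hh : Integrable h ((μ.map U).prod (μ.map G))) :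
    ∫ ω, h (U ω, G ω) ∂μ = ∫ ω, ∫ g, h (U ω, g) ∂(μ.map G) ∂μ := by
  have hmap := (indepFun_iff_map_prod_eq_prod_map_map hU hG).1 hUG
  rw [← integral_map (f := h) (hU.prodMk hG) (hmap ▸ hh.aestronglyMeasurable), hmap,
    integral_prod _ hh, integral_map hU hh.integral_prod_left.aestronglyMeasurable]

lemma ProbabilityTheory.iIndepFun.indepFun_comp_of_disjoint {Ω ι α β γ : Type*}
    [MeasurableSpace Ω] [MeasurableSpace γ] {μ : Measure Ω} {f : ι → Ω → γ} (hf : iIndepFun f μ)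
    (hfm : ∀ i, Measurable (f i)) {a : α → ι} {b : β → ι} (hab : ∀ i j, a i ≠ b j) :
    IndepFun (fun ω i => f (a i) ω) (fun ω j => f (b j) ω) μ := by
  have hle : ∀ i, MeasurableSpace.comap (f i) inferInstance ≤ ‹MeasurableSpace Ω› :=
    fun i => (hfm i).comap_le
  refine indep_of_indep_of_le_right (indep_of_indep_of_le_left
    (indep_biSup_compl hle ((iIndepFun_iff_iIndep _ _ _).1 hf) (Set.range a)) ?_) ?_
  · simp_rw [MeasurableSpace.pi, MeasurableSpace.comap_iSup, MeasurableSpace.comap_comp,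
      Function.comp_def, iSup_le_iff]
    exact fun i => le_biSup (fun n => MeasurableSpace.comap (f n) inferInstance) ⟨i, rfl⟩
  · simp_rw [MeasurableSpace.pi, MeasurableSpace.comap_iSup, MeasurableSpace.comap_comp,
      Function.comp_def, iSup_le_iff]
    exact fun j => le_biSup (fun n => MeasurableSpace.comap (f n) inferInstance)
      (by rintro ⟨i, hi⟩; exact hab i j hi)

section Probability

variable {Ω : Type*} [MeasurableSpace Ω] {μ : Measure Ω}

lemma one_sub_two_mul_measureReal_compl_le_norm_integral [IsProbabilityMeasure μ] {f : Ω → ℂ}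
    (hf : Integrable f μ) (hf1 : ∀ ω, ‖f ω‖ ≤ 1) {A : Set Ω} (hA : MeasurableSet A)
    (hfA : ∀ᵐ ω ∂μ, ω ∈ A → f ω = 1) :
    1 - 2 * μ.real Aᶜ ≤ ‖∫ ω, f ω ∂μ‖ := by
  have hint_A : ∫ ω in A, f ω ∂μ = μ.real A := by
    rw [setIntegral_congr_ae hA hfA, setIntegral_const, Complex.real_smul, mul_one]
  have hint_Ac : ‖∫ ω in Aᶜ, f ω ∂μ‖ ≤ μ.real Aᶜ := by
    simpa using norm_setIntegral_le_of_norm_le_const (measure_lt_top μ Aᶜ) fun ω _ => hf1 ω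
  have hsum := measureReal_add_measureReal_compl (μ := μ) hA
  rw [probReal_univ] at hsum
  calc 1 - 2 * μ.real Aᶜ = ‖(μ.real A : ℂ)‖ - μ.real Aᶜ := by
        rw [Complex.norm_real, Real.norm_of_nonneg measureReal_nonneg]
        linarith
    _ ≤ ‖(μ.real A : ℂ) + ∫ ω in Aᶜ, f ω ∂μ‖ := by
        have := norm_sub_le ((μ.real A : ℂ) + ∫ ω in Aᶜ, f ω ∂μ) (∫ ω in Aᶜ, f ω ∂μ)
        rw [add_sub_cancel_right] at this
        linarith
    _ = ‖∫ ω, f ω ∂μ‖ := by rw [← hint_A, integral_add_compl hA hf]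

lemma tendsto_measureReal_exists_lt_atTop [IsFiniteMeasure μ] {ι : Type*} {f : ι → Ω → ℝ}
    {s : Set ι} (hs : s.Finite) (hf : ∀ i, Measurable (f i)) :
    Tendsto (fun x => μ.real {ω | ∃ i ∈ s, x < f i ω}) atTop (𝓝 0) := by
  have hmeas : ∀ x : ℝ, MeasurableSet {ω | ∃ i ∈ s, x < f i ω} := fun x => by
    convert MeasurableSet.biUnion hs.countable fun i _ =>
      measurableSet_lt (measurable_const (a := x)) (hf i) using 1
    ext ω
    simp
  have hanti : Antitone (fun x : ℝ => {ω | ∃ i ∈ s, x < f i ω}) :=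
    fun x y hxy ω ⟨i, hi, hlt⟩ => ⟨i, hi, hxy.trans_lt hlt⟩
  have hempty : ⋂ x : ℝ, {ω | ∃ i ∈ s, x < f i ω} = ∅ := by
    refine Set.eq_empty_of_forall_notMem fun ω hω => ?_
    obtain ⟨x, hx⟩ := (hs.image fun i => f i ω).bddAbove
    obtain ⟨i, hi, hlt⟩ := Set.mem_iInter.1 hω x
    exact (hx ⟨i, hi, rfl⟩).not_gt hlt
  have h := tendsto_measure_iInter_atTop (μ := μ) (fun x => (hmeas x).nullMeasurableSet) hanti
    ⟨0, measure_ne_top μ _⟩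
  rw [hempty, measure_empty] at h
  simpa [Function.comp_def, Measure.real] using (ENNReal.tendsto_toReal ENNReal.zero_ne_top).comp h

lemma ae_exists_lt_of_measure_forall_exists_lt_eq_one [IsProbabilityMeasure μ]
    {f : ℕ → Ω → ℝ} (hf : ∀ n, Measurable (f n)) (h : μ {ω | ∀ M : ℝ, ∃ n, M < f n ω} = 1)
    (x : ℝ) : ∀ᵐ ω ∂μ, ∃ n, x < f n ω := by
  refine (mem_ae_iff_prob_eq_one ?_).2 (le_antisymm prob_le_one (h ▸ measure_mono fun ω h => h x))
  simp only [Set.ofPred_exists]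
  exact .iUnion fun n => measurableSet_lt measurable_const (hf n)

lemma prob_exists_eq_mul_eq_one_iff [IsProbabilityMeasure μ] {W : Ω → ℝ} (hW : Measurable W)
    (d : ℝ) : μ {ω | ∃ m : ℤ, W ω = d * m} = 1 ↔ ∀ᵐ ω ∂μ, W ω ∈ AddSubgroup.zmultiples d := by
  simp_rw [← mem_zmultiples_iff_exists_eq_mul]
  exact (mem_ae_iff_prob_eq_one (hW (measurableSet_zmultiples d))).symm

end Probability

lemma norm_exp_I_mul_ofReal_mul_ofReal (s y : ℝ) : ‖Complex.exp (Complex.I * s * y)‖ = 1 := by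
  rw [Complex.norm_exp]
  simp

/-- `E |E[e^{isS} | T]|`, the quantity in condition (1.24). -/
def meanNormCondCharFun {Ω : Type} [MeasurableSpace Ω] (P : Measure Ω) (T S : Ω → ℝ) (s : ℝ) :
    ℝ :=
  ∫ ω, ‖(P[fun ω => Complex.exp (Complex.I * s * S ω) |
    MeasurableSpace.comap T Real.measurableSpace]) ω‖ ∂P

section CondCharFun

variable {Ω : Type} [MeasurableSpace Ω] {P : Measure Ω}

lemma integrable_exp_I_mul_ofReal_mul [IsFiniteMeasure P] {S : Ω → ℝ} (hS : Measurable S)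
    (s : ℝ) : Integrable (fun ω => Complex.exp (Complex.I * s * S ω)) P :=
  .of_bound (by fun_prop) 1 (ae_of_all _ fun ω => (norm_exp_I_mul_ofReal_mul_ofReal s (S ω)).le)

lemma continuous_meanNormCondCharFun [IsFiniteMeasure P] (T : Ω → ℝ) {S : Ω → ℝ}
    (hS : Measurable S) : Continuous (meanNormCondCharFun P T S) := by
  set Z : ℝ → Ω → ℂ := fun s ω => Complex.exp (Complex.I * s * S ω)
  refine continuous_iff_continuousAt.2 fun s₀ => tendsto_iff_dist_tendsto_zero.2 ?_
  have hL1 : Tendsto (fun s => ∫ ω, ‖Z s ω - Z s₀ ω‖ ∂P) (𝓝 s₀) (𝓝 0) := by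
    have hZ : ∀ s ω, ‖‖Z s ω - Z s₀ ω‖‖ ≤ 2 := fun s ω => by
      rw [norm_norm]
      refine (norm_sub_le _ _).trans ?_
      simp only [Z, norm_exp_I_mul_ofReal_mul_ofReal]
      norm_num
    simpa using tendsto_integral_filter_of_dominated_convergence (μ := P)
      (F := fun s ω => ‖Z s ω - Z s₀ ω‖) (fun _ => (2 : ℝ))
      (.of_forall fun s => by fun_prop) (.of_forall fun s => ae_of_all _ (hZ s))
      (integrable_const 2) (ae_of_all _ fun ω => (by fun_prop : Continuous fun s =>
        ‖Z s ω - Z s₀ ω‖).tendsto s₀)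
  refine squeeze_zero (fun _ => dist_nonneg) (fun s => ?_) hL1
  exact (Real.dist_eq _ _).le.trans (abs_integral_norm_condExp_sub_le
    (integrable_exp_I_mul_ofReal_mul hS s) (integrable_exp_I_mul_ofReal_mul hS s₀))

/-- Freezing `G` turns `E[e(T, G) e^{isS}]` into `E[c(T) e^{isS}]` with `‖c‖ ≤ 1`, and a
`σ(T)`-measurable factor can be moved onto `E[e^{isS} | T]`. -/
lemma one_sub_two_mul_measureReal_compl_le_meanNormCondCharFun [IsProbabilityMeasure P]
    {β : Type*} [MeasurableSpace β] {T S : Ω → ℝ} {G : Ω → β} (hT : Measurable T)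
    (hS : Measurable S) (hG : Measurable G) (hindep : IndepFun (fun ω => (T ω, S ω)) G P)
    {e : ℝ × β → ℂ} (he : Measurable e) (he1 : ∀ p, ‖e p‖ ≤ 1) {A : Set Ω}
    (hA : MeasurableSet A) {s : ℝ}
    (hAe : ∀ᵐ ω ∂P, ω ∈ A → e (T ω, G ω) * Complex.exp (Complex.I * s * S ω) = 1) :
    1 - 2 * P.real Aᶜ ≤ meanNormCondCharFun P T S s := by
  have hbound : ∀ p (y : ℝ), ‖e p * Complex.exp (Complex.I * s * y)‖ ≤ 1 := fun p y => by
    rw [norm_mul, norm_exp_I_mul_ofReal_mul_ofReal, mul_one]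
    exact he1 p
  have := Measure.isProbabilityMeasure_map (μ := P) hG.aemeasurable
  let c : ℝ → ℂ := fun a => ∫ g, e (a, g) ∂(P.map G)
  have hc : StronglyMeasurable c := he.stronglyMeasurable.integral_prod_right'
  have hc1 : ∀ a, ‖c a‖ ≤ 1 := fun a => by
    simpa using norm_integral_le_of_norm_le_const (μ := P.map G) (ae_of_all _ fun g => he1 (a, g))
  have hfreeze : ∫ ω, e (T ω, G ω) * Complex.exp (Complex.I * s * S ω) ∂P =
      ∫ ω, c (T ω) * Complex.exp (Complex.I * s * S ω) ∂P := by
    rw [hindep.integral_comp_prodMk (hT.prodMk hS).aemeasurable hG.aemeasurable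
      (h := fun q => e (q.1.1, q.2) * Complex.exp (Complex.I * s * q.1.2))
      (.of_bound (by fun_prop) 1 (ae_of_all _ fun q => hbound _ _))]
    simp_rw [integral_mul_const]
    rfl
  calc 1 - 2 * P.real Aᶜ
      ≤ ‖∫ ω, e (T ω, G ω) * Complex.exp (Complex.I * s * S ω) ∂P‖ :=
        one_sub_two_mul_measureReal_compl_le_norm_integral
          (.of_bound (by fun_prop) 1 (ae_of_all _ fun ω => hbound _ _)) (fun ω => hbound _ _)
          hA hAe
    _ = ‖∫ ω, c (T ω) * Complex.exp (Complex.I * s * S ω) ∂P‖ := by rw [hfreeze]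
    _ ≤ _ := norm_integral_mul_le_integral_norm_condExp hT.comap_le
        (hc.comp_measurable (measurable_iff_comap_le.2 le_rfl)) (fun ω => hc1 (T ω))
        (integrable_exp_I_mul_ofReal_mul hS s)

end CondCharFun

section RenewalProcess

variable {Ω : Type} [MeasurableSpace Ω] {P : Measure Ω} {Xn Yn : ℕ → Ω → ℝ}

lemma indepFun_partialSums_shift [IsProbabilityMeasure P] (hXn : ∀ i, Measurable (Xn i))
    (hYn : ∀ i, Measurable (Yn i)) (hindep : iIndepFun (fun n ω => (Xn n ω, Yn n ω)) P)
    (k : ℕ) :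
    IndepFun (fun ω => (∑ i ∈ Finset.range k, Xn i ω, ∑ i ∈ Finset.range k, Yn i ω))
      (fun ω i => (Xn (k + i) ω, Yn (k + i) ω)) P := by
  have hblock := hindep.indepFun_comp_of_disjoint (fun i => (hXn i).prodMk (hYn i))
    (a := (Fin.val : Fin k → ℕ)) (b := (k + ·)) (fun i j => by omega)
  convert hblock.comp (φ := fun b : Fin k → ℝ × ℝ => (∑ i, (b i).1, ∑ i, (b i).2))
    (by fun_prop) measurable_id using 1
  · ext ω <;> simp [Finset.sum_range]
  · rfl

lemma one_sub_two_mul_measureReal_le_meanNormCondCharFun_of_exp_WW_eq_one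
    [IsProbabilityMeasure P] (hXn : ∀ i, Measurable (Xn i)) (hYn : ∀ i, Measurable (Yn i))
    (hindep : iIndepFun (fun n ω => (Xn n ω, Yn n ω)) P) {k : ℕ} {x s : ℝ}
    (hexit : ∀ᵐ ω ∂P, ∃ n, x < ∑ i ∈ Finset.range n, Xn i ω)
    (hW : ∀ᵐ ω ∂P, Complex.exp (Complex.I * s * WW Xn Yn x ω) = 1) :
    1 - 2 * P.real {ω | ∃ j ≤ k, x < ∑ i ∈ Finset.range j, Xn i ω} ≤
      meanNormCondCharFun P (fun ω => ∑ i ∈ Finset.range k, Xn i ω)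
        (fun ω => ∑ i ∈ Finset.range k, Yn i ω) s := by
  have hAc : {ω | ∃ j ≤ k, x < ∑ i ∈ Finset.range j, Xn i ω} =
      {ω | ∀ j ≤ k, ∑ i ∈ Finset.range j, Xn i ω ≤ x}ᶜ := by
    ext ω
    simp
  rw [hAc]
  refine one_sub_two_mul_measureReal_compl_le_meanNormCondCharFun (by fun_prop) (by fun_prop)
    (measurable_pi_lambda _ fun i => (hXn (k + i)).prodMk (hYn (k + i)))
    (indepFun_partialSums_shift hXn hYn hindep k)
    (e := fun p => Complex.exp (Complex.I * s * pathWW (x - p.1) p.2))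
    (by fun_prop) (fun p => (norm_exp_I_mul_ofReal_mul_ofReal _ _).le)
    (measurable_prodMk_left (x := x) (measurableSet_setOf_forall_sum_le hXn k)) ?_
  filter_upwards [hexit, hW] with ω hω hWω hAω
  rw [WW_eq_add_pathWW hAω hω] at hWω
  rw [← hWω, ← Complex.exp_add]
  congr 1
  push_cast
  ring

lemma ae_forall_WW_mem_zmultiples {X Y : Ω → ℝ} (hX : Measurable X) (hY : Measurable Y)
    (hXn : ∀ n, Measurable (Xn n)) (hYn : ∀ n, Measurable (Yn n))
    (hiid : ∀ n, Measure.map (fun ω => (Xn n ω, Yn n ω)) P = Measure.map (fun ω => (X ω, Y ω)) P)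
    {d : ℝ} (hYd : ∀ᵐ ω ∂P, Y ω ∈ AddSubgroup.zmultiples d) :
    ∀ᵐ ω ∂P, ∀ x, WW Xn Yn x ω ∈ AddSubgroup.zmultiples d := by
  have hYnd : ∀ᵐ ω ∂P, ∀ n, Yn n ω ∈ AddSubgroup.zmultiples d := ae_all_iff.2 fun n =>
    ((IdentDistrib.mk ((hXn n).prodMk (hYn n)).aemeasurable (hX.prodMk hY).aemeasurable
      (hiid n)).comp measurable_snd).symm.ae_mem_snd (measurableSet_zmultiples d) hYd
  filter_upwards [hYnd] with ω hω x
  exact AddSubgroup.sum_mem _ fun i _ => hω i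

end RenewalProcess

theorem W_has_span_d_general
    {Ω : Type} [MeasurableSpace Ω] (P : Measure Ω) [IsProbabilityMeasure P]
    (X Y : Ω → ℝ) (Xn Yn : ℕ → Ω → ℝ)
    (hX : Measurable X) (hY : Measurable Y)
    (hXn : ∀ n, Measurable (Xn n)) (hYn : ∀ n, Measurable (Yn n))
    (hiid : ∀ n, Measure.map (fun ω => (Xn n ω, Yn n ω)) P = Measure.map (fun ω => (X ω, Y ω)) P)
    (hindep : iIndepFun (fun n ω => (Xn n ω, Yn n ω)) P)
    (hsup : P {ω | ∀ M : ℝ, ∃ n, M < ∑ i ∈ Finset.range n, Xn i ω} = 1)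
    -- `Y` is lattice valued with span `d`
    (d : ℝ) (hYspan : HasSpan P Y d)
    -- condition (1.24)
    (k : ℕ)
    (h124 : ∀ s ∈ Set.Ioc (0:ℝ) (π / d),
      ∫ ω, ‖(P[fun ω => Complex.exp (Complex.I * s * (∑ i ∈ Finset.range k, Yn i ω)) |
        MeasurableSpace.comap (fun ω => ∑ i ∈ Finset.range k, Xn i ω) Real.measurableSpace]) ω‖ ∂P
        < 1) :
    ∃ x₀ : ℝ, ∀ x ≥ x₀, HasSpan P (WW Xn Yn x) d := by
  obtain ⟨hd, hYd, -⟩ := hYspan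
  let T := fun ω => ∑ i ∈ Finset.range k, Xn i ω
  let S := fun ω => ∑ i ∈ Finset.range k, Yn i ω
  obtain ⟨s₀, hs₀, hmax⟩ := (isCompact_Icc (a := 2 * π / (3 * d)) (b := π / d)).exists_isMaxOn
    (nonempty_Icc.2 (by rw [div_le_div_iff₀ (by linarith) hd]; nlinarith [mul_pos pi_pos hd]))
    (continuous_meanNormCondCharFun (P := P) T (S := S) (by fun_prop)).continuousOn
  have hF₀ : meanNormCondCharFun P T S s₀ < 1 :=
    h124 s₀ ⟨lt_of_lt_of_le (div_pos (by positivity) (by linarith)) hs₀.1, hs₀.2⟩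
  obtain ⟨x₀, hx₀⟩ : ∃ x₀, ∀ x ≥ x₀, P.real {ω | ∃ j ≤ k, x < ∑ i ∈ Finset.range j, Xn i ω} <
      (1 - meanNormCondCharFun P T S s₀) / 2 :=
    eventually_atTop.1 ((tendsto_measureReal_exists_lt_atTop (Set.finite_Iic k)
      (fun j => by fun_prop)).eventually (gt_mem_nhds (by linarith)))
  have hlat := ae_forall_WW_mem_zmultiples hX hY hXn hYn hiid
    ((prob_exists_eq_mul_eq_one_iff hY d).1 hYd)
  refine ⟨x₀, fun x hx => ⟨hd, (prob_exists_eq_mul_eq_one_iff (measurable_WW hXn hYn x) d).2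
    (hlat.mono fun ω h => h x), fun t _ hWt => ?_⟩⟩
  by_contra! hdt
  obtain ⟨s, hs, hexp⟩ := exists_mem_Icc_forall_exp_eq_one hd hdt
  have hkey : 1 - 2 * P.real {ω | ∃ j ≤ k, x < ∑ i ∈ Finset.range j, Xn i ω} ≤
      meanNormCondCharFun P T S s := by
    refine one_sub_two_mul_measureReal_le_meanNormCondCharFun_of_exp_WW_eq_one hXn hYn hindep
      (ae_exists_lt_of_measure_forall_exists_lt_eq_one (fun n => by fun_prop) hsup x) ?_
    filter_upwards [hlat, (prob_exists_eq_mul_eq_one_iff (measurable_WW hXn hYn x) t).1 hWt]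
      with ω h1 h2
    exact hexp _ ⟨h1 x, h2⟩
  linarith [hx₀ x hx, isMaxOn_iff.1 hmax s hs]

/-- Lemma 4.3: for all `x ≫ 1`, `W(x)` is lattice valued with span `d`. -/
theorem W_has_span_d
    {Ω : Type} [MeasurableSpace Ω] (P : Measure Ω) [IsProbabilityMeasure P]
    (X Y : Ω → ℝ) (Xn Yn : ℕ → Ω → ℝ)
    (hX : Measurable X) (hY : Measurable Y)
    (hXn : ∀ n, Measurable (Xn n)) (hYn : ∀ n, Measurable (Yn n))
    (hiid : ∀ n, Measure.map (fun ω => (Xn n ω, Yn n ω)) P = Measure.map (fun ω => (X ω, Y ω)) P)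
    (hindep : iIndepFun (fun n ω => (Xn n ω, Yn n ω)) P)
    (hXnondeg : ¬ ∃ c : ℝ, P {ω | X ω = c} = 1)
    (hYnondeg : ¬ ∃ c : ℝ, P {ω | Y ω = c} = 1)
    (hsup : P {ω | ∀ M : ℝ, ∃ n, M < ∑ i ∈ Finset.range n, Xn i ω} = 1)
    -- condition (1): the law of `X` has a subcomponent with a `C²` density
    (Φ Ψ : Measure ℝ) (ρ : ℝ → ℝ)
    (hXlaw : Measure.map X P = Φ + Ψ) (hΦpos : 0 < Φ Set.univ)
    (hΦdens : Φ = volume.withDensity (fun x => ENNReal.ofReal (ρ x)))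
    (hρC2 : ContDiff ℝ 2 ρ)
    -- `Y` is lattice valued with span `d`
    (d : ℝ) (hYspan : HasSpan P Y d)
    -- condition (1.24)
    (k : ℕ) (hk : 0 < k)
    (h124 : ∀ s ∈ Set.Ioc (0:ℝ) (π / d),
      ∫ ω, ‖(P[fun ω => Complex.exp (Complex.I * s * (∑ i ∈ Finset.range k, Yn i ω)) |
        MeasurableSpace.comap (fun ω => ∑ i ∈ Finset.range k, Xn i ω) Real.measurableSpace]) ω‖ ∂P
        < 1) :
    ∃ x₀ : ℝ, ∀ x ≥ x₀, HasSpan P (WW Xn Yn x) d :=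
  W_has_span_d_general P X Y Xn Yn hX hY hXn hYn hiid hindep hsup d hYspan k h124
end
end

section
/- Let (X, Y) ∈ ℝ² be a random vector with X and Y nondegenerate and Pr{sup_{n≥1} Σ_{i=1}^n X_i = ∞} = 1 for i.i.d. copies X_i of X. Then: (1) for any t with 𝓓_t ≠ ∅, the map s ↦ E[e^{tY − sX}] is strictly convex on 𝓓_t, and for any t₁, t₂ and λ ∈ (0,1), (1−λ)𝓓_{t₁} + λ𝓓_{t₂} ⊂ 𝓓_{(1−λ)t₁ + λt₂}; (2) for any t ∈ ℝ, 𝓓_t is a closed interval and h(t) > −∞; in particular, if h(t) < ∞, then h(t) ∈ 𝓓_t. -/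
open MeasureTheory ProbabilityTheory Real Set Filter Asymptotics
open scoped ENNReal

noncomputable section

/-! Hölder's inequality makes `(t, s) ↦ log E[e^{tY - sX}]` jointly convex, which gives the
Minkowski inclusion and the convexity of `𝓓_t`, and Fatou's lemma makes `𝓓_t` closed. Unbounded
partial sums force `P(X > 0) > 0`, so by monotone convergence `E[e^{tY - sX}] → ∞` as `s → -∞`,
which bounds `𝓓_t` below; on the non-null set `{X ≠ 0}` the strict convexity of `exp` is strict
in `s`. -/

open scoped Topology

section General

theorem integral_lt_integral_of_ae_le_of_measure_setOf_lt_ne_zero {α : Type*} [MeasurableSpace α]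
    {μ : Measure α} {f g : α → ℝ} (hf : Integrable f μ) (hg : Integrable g μ)
    (hle : f ≤ᵐ[μ] g) (hlt : μ {x | f x < g x} ≠ 0) :
    ∫ x, f x ∂μ < ∫ x, g x ∂μ := by
  rw [← sub_pos, ← integral_sub hg hf, integral_pos_iff_support_of_nonneg_ae]
  · exact pos_iff_ne_zero.2 (mt (measure_mono_null fun x hx => (sub_pos.2 hx.out).ne') hlt)
  exacts [hle.mono fun x => sub_nonneg.2, hg.sub hf]

theorem measure_preimage_fst_eq_of_map_eq {Ω β γ : Type*} [MeasurableSpace Ω] [MeasurableSpace β]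
    [MeasurableSpace γ] {P : Measure Ω} [NeZero P] {X X' : Ω → β} {Y Y' : Ω → γ}
    (hX : Measurable X) (hY : Measurable Y)
    (h : P.map (fun ω => (X' ω, Y' ω)) = P.map (fun ω => (X ω, Y ω)))
    {S : Set β} (hS : MeasurableSet S) : P (X' ⁻¹' S) = P (X ⁻¹' S) := by
  have hXY : Measurable fun ω => (X ω, Y ω) := hX.prodMk hY
  -- a map that is not a.e.-measurable pushes `P` forward to `0`
  have hXY' : AEMeasurable (fun ω => (X' ω, Y' ω)) P :=
    .of_map_ne_zero (h ▸ (Measure.map_ne_zero_iff hXY.aemeasurable).2 (NeZero.ne P))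
  have := congrArg (· (Prod.fst ⁻¹' S)) h
  rwa [Measure.map_apply_of_aemeasurable hXY' (measurable_fst hS),
    Measure.map_apply hXY (measurable_fst hS)] at this

theorem exists_measure_preimage_Ioi_ne_zero_of_unbounded_sums {Ω : Type*} [MeasurableSpace Ω]
    {P : Measure Ω} {Xn : ℕ → Ω → ℝ}
    (h : P {ω | ∀ M : ℝ, ∃ n, M < ∑ i ∈ Finset.range n, Xn i ω} ≠ 0) :
    ∃ i, P (Xn i ⁻¹' Ioi 0) ≠ 0 := by
  by_contra! hnull
  refine h (measure_mono_null (fun ω hω => ?_) (measure_iUnion_null hnull))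
  obtain ⟨n, hn⟩ := hω 0
  by_contra hω'
  simp only [mem_iUnion, mem_preimage, mem_Ioi, not_exists, not_lt] at hω'
  exact hn.not_ge (Finset.sum_nonpos fun i _ => hω' i)

theorem lintegral_ofReal_exp_convexComb_le {Ω : Type*} [MeasurableSpace Ω] {P : Measure Ω}
    {f g : Ω → ℝ} (hf : AEMeasurable f P) (hg : AEMeasurable g P)
    {a b : ℝ} (ha : 0 ≤ a) (hb : 0 ≤ b) (hab : a + b = 1) :
    ∫⁻ ω, ENNReal.ofReal (exp (a * f ω + b * g ω)) ∂P ≤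
      (∫⁻ ω, ENNReal.ofReal (exp (f ω)) ∂P) ^ a * (∫⁻ ω, ENNReal.ofReal (exp (g ω)) ∂P) ^ b := by
  have hpow (r x : ℝ) : ENNReal.ofReal (exp x) ^ r = ENNReal.ofReal (exp (r * x)) := by
    rw [ENNReal.ofReal_rpow_of_pos (exp_pos x), ← exp_mul, mul_comm]
  have := ENNReal.lintegral_mul_norm_pow_le (hf.exp.ennreal_ofReal) (hg.exp.ennreal_ofReal) ha hb hab
  simpa only [hpow, ← ENNReal.ofReal_mul (exp_pos _).le, ← exp_add] using this

end General

section Dset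

variable {Ω : Type} [MeasurableSpace Ω] {P : Measure Ω} {X Y : Ω → ℝ}

theorem convexComb_mem_Dset (hX : Measurable X) (hY : Measurable Y) {a b : ℝ}
    (ha : 0 ≤ a) (hb : 0 ≤ b) (hab : a + b = 1) {t₁ t₂ s₁ s₂ : ℝ}
    (hs₁ : s₁ ∈ Dset P X Y t₁) (hs₂ : s₂ ∈ Dset P X Y t₂) :
    a * s₁ + b * s₂ ∈ Dset P X Y (a * t₁ + b * t₂) := by
  have hexp : ∀ ω, (a * t₁ + b * t₂) * Y ω - (a * s₁ + b * s₂) * X ω =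
      a * (t₁ * Y ω - s₁ * X ω) + b * (t₂ * Y ω - s₂ * X ω) := fun ω => by ring
  calc ∫⁻ ω, ENNReal.ofReal (exp ((a * t₁ + b * t₂) * Y ω - (a * s₁ + b * s₂) * X ω)) ∂P
      ≤ (∫⁻ ω, ENNReal.ofReal (exp (t₁ * Y ω - s₁ * X ω)) ∂P) ^ a *
          (∫⁻ ω, ENNReal.ofReal (exp (t₂ * Y ω - s₂ * X ω)) ∂P) ^ b := by
        simp only [hexp]
        exact lintegral_ofReal_exp_convexComb_le (by fun_prop) (by fun_prop) ha hb hab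
    _ ≤ 1 ^ a * 1 ^ b := by gcongr; exacts [hs₁, hs₂]
    _ = 1 := by simp

theorem convex_Dset (hX : Measurable X) (hY : Measurable Y) (t : ℝ) :
    Convex ℝ (Dset P X Y t) := fun _ h₁ _ h₂ a b ha hb hab => by
  simpa only [smul_eq_mul, ← add_mul, hab, one_mul] using
    convexComb_mem_Dset hX hY ha hb hab h₁ h₂ (t₁ := t) (t₂ := t)

theorem isClosed_Dset (hX : Measurable X) (hY : Measurable Y) (t : ℝ) :
    IsClosed (Dset P X Y t) := by
  refine IsSeqClosed.isClosed fun u s hu hus => ?_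
  have hpt : ∀ ω, Tendsto (fun n => ENNReal.ofReal (exp (t * Y ω - u n * X ω))) atTop
      (𝓝 (ENNReal.ofReal (exp (t * Y ω - s * X ω)))) := fun ω =>
    ((ENNReal.continuous_ofReal.comp continuous_exp).tendsto _).comp
      (tendsto_const_nhds.sub (hus.mul_const _))
  calc ∫⁻ ω, ENNReal.ofReal (exp (t * Y ω - s * X ω)) ∂P
      = ∫⁻ ω, liminf (fun n => ENNReal.ofReal (exp (t * Y ω - u n * X ω))) atTop ∂P :=
        lintegral_congr fun ω => (hpt ω).liminf_eq.symm
    _ ≤ liminf (fun n => ∫⁻ ω, ENNReal.ofReal (exp (t * Y ω - u n * X ω)) ∂P) atTop :=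
        lintegral_liminf_le fun n => by fun_prop
    _ ≤ 1 := liminf_le_of_frequently_le' (Frequently.of_forall hu)

theorem bddBelow_Dset (hX : Measurable X) (hY : Measurable Y) (hpos : P {ω | 0 < X ω} ≠ 0)
    (t : ℝ) : BddBelow (Dset P X Y t) := by
  set S := {ω | 0 < X ω}
  have hS : MeasurableSet S := measurableSet_lt measurable_const hX
  have htend : Tendsto (fun n : ℕ => ∫⁻ ω in S, ENNReal.ofReal (exp (t * Y ω + n * X ω)) ∂P)
      atTop (𝓝 ⊤) := by
    have := lintegral_tendsto_of_tendsto_of_monotone (μ := P.restrict S)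
      (f := fun n ω => ENNReal.ofReal (exp (t * Y ω + n * X ω))) (F := fun _ => ⊤)
      (fun n => Measurable.aemeasurable (by fun_prop))
      (ae_restrict_of_forall_mem hS fun ω hω n m hnm => ENNReal.ofReal_le_ofReal
        (exp_le_exp.2 (by gcongr; exact hω.out.le)))
      (ae_restrict_of_forall_mem hS fun ω hω => ENNReal.tendsto_ofReal_atTop.comp
        (tendsto_exp_atTop.comp (tendsto_atTop_add_const_left _ _
          (tendsto_natCast_atTop_atTop.atTop_mul_const hω.out))))
    simpa [ENNReal.top_mul hpos] using this
  obtain ⟨n, hn⟩ := (htend.eventually (lt_mem_nhds ENNReal.one_lt_top)).exists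
  refine ⟨-n, fun s hs => ?_⟩
  by_contra! hlt
  refine (hn.trans_le ?_).not_ge hs
  calc ∫⁻ ω in S, ENNReal.ofReal (exp (t * Y ω + n * X ω)) ∂P
      ≤ ∫⁻ ω in S, ENNReal.ofReal (exp (t * Y ω - s * X ω)) ∂P :=
        setLIntegral_mono (by fun_prop) fun ω hω =>
          ENNReal.ofReal_le_ofReal (exp_le_exp.2 (by nlinarith [hω.out]))
    _ ≤ _ := setLIntegral_le_lintegral _ _

theorem integrable_of_mem_Dset (hX : Measurable X) (hY : Measurable Y) {t s : ℝ}
    (hs : s ∈ Dset P X Y t) : Integrable (fun ω => exp (t * Y ω - s * X ω)) P := by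
  refine ⟨by fun_prop, ?_⟩
  rw [hasFiniteIntegral_iff_ofReal (Eventually.of_forall fun ω => (exp_pos _).le)]
  exact hs.trans_lt ENNReal.one_lt_top

theorem strictConvexOn_Dset (hX : Measurable X) (hY : Measurable Y)
    (hX0 : P {ω | X ω ≠ 0} ≠ 0) (t : ℝ) :
    StrictConvexOn ℝ (Dset P X Y t) (fun s => ∫ ω, exp (t * Y ω - s * X ω) ∂P) := by
  refine ⟨convex_Dset hX hY t, fun x hx y hy hxy a b ha hb hab => ?_⟩
  have hm := convex_Dset hX hY t hx hy ha.le hb.le hab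
  simp only [smul_eq_mul] at hm ⊢
  have hexp : ∀ ω, t * Y ω - (a * x + b * y) * X ω =
      a • (t * Y ω - x * X ω) + b • (t * Y ω - y * X ω) := fun ω => by
    simp only [smul_eq_mul]; linear_combination (t * Y ω) * hab.symm
  rw [← integral_const_mul, ← integral_const_mul,
    ← integral_add ((integrable_of_mem_Dset hX hY hx).const_mul a)
      ((integrable_of_mem_Dset hX hY hy).const_mul b)]
  refine integral_lt_integral_of_ae_le_of_measure_setOf_lt_ne_zero
    (integrable_of_mem_Dset hX hY hm)
    (((integrable_of_mem_Dset hX hY hx).const_mul a).add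
      ((integrable_of_mem_Dset hX hY hy).const_mul b))
    (ae_of_all _ fun ω => ?_) fun h0 => hX0 (measure_mono_null (fun ω hω => ?_) h0)
  · dsimp only
    rw [hexp]
    exact convexOn_exp.2 trivial trivial ha.le hb.le hab
  · change exp _ < _
    rw [hexp]
    refine strictConvexOn_exp.2 trivial trivial (fun h => hxy ?_) ha hb hab
    exact mul_right_cancel₀ hω (by linarith)

end Dset

theorem Dset_convexity_properties_general
    {Ω : Type} [MeasurableSpace Ω] (P : Measure Ω) [IsProbabilityMeasure P]
    (X Y : Ω → ℝ) (Xn Yn : ℕ → Ω → ℝ)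
    (hX : Measurable X) (hY : Measurable Y)
    (hiid : ∀ n, Measure.map (fun ω => (Xn n ω, Yn n ω)) P = Measure.map (fun ω => (X ω, Y ω)) P)
    (hsup : P {ω | ∀ M : ℝ, ∃ n, M < ∑ i ∈ Finset.range n, Xn i ω} = 1)
    :
    -- (1): strict convexity of `s ↦ E[e^{tY - sX}]` on `𝓓_t`, and the Minkowski inclusion
    (∀ t : ℝ, (Dset P X Y t).Nonempty →
      StrictConvexOn ℝ (Dset P X Y t) (fun s => ∫ ω, Real.exp (t * Y ω - s * X ω) ∂P)) ∧
    (∀ t₁ t₂ lam : ℝ, lam ∈ Set.Ioo (0:ℝ) 1 →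
      ∀ s₁ ∈ Dset P X Y t₁, ∀ s₂ ∈ Dset P X Y t₂,
        (1 - lam) * s₁ + lam * s₂ ∈ Dset P X Y ((1 - lam) * t₁ + lam * t₂)) ∧
    -- (2): `𝓓_t` is a closed interval, `h(t) > -∞`, and `h(t) ∈ 𝓓_t` whenever `h(t) < ∞`
    (∀ t : ℝ, IsClosed (Dset P X Y t) ∧ (Dset P X Y t).OrdConnected ∧
      BddBelow (Dset P X Y t) ∧
      ((Dset P X Y t).Nonempty → sInf (Dset P X Y t) ∈ Dset P X Y t)) := by
  have hpos : P {ω | 0 < X ω} ≠ 0 := by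
    obtain ⟨i, hi⟩ := exists_measure_preimage_Ioi_ne_zero_of_unbounded_sums (hsup ▸ one_ne_zero)
    rwa [measure_preimage_fst_eq_of_map_eq hX hY (hiid i) measurableSet_Ioi] at hi
  have hX0 : P {ω | X ω ≠ 0} ≠ 0 := fun h => hpos (measure_mono_null (fun _ hω => hω.out.ne') h)
  refine ⟨fun t _ => strictConvexOn_Dset hX hY hX0 t,
    fun t₁ t₂ lam hlam s₁ h₁ s₂ h₂ => convexComb_mem_Dset hX hY (sub_nonneg.2 hlam.2.le)
      hlam.1.le (sub_add_cancel 1 lam) h₁ h₂, fun t => ?_⟩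
  have hclosed := isClosed_Dset (P := P) hX hY t
  have hbdd := bddBelow_Dset hX hY hpos t
  exact ⟨hclosed, (convex_Dset hX hY t).ordConnected, hbdd, fun hne => hclosed.csInf_mem hne hbdd⟩

/-- Lemma 6.1, parts (1) and (2). -/
theorem Dset_convexity_properties
    {Ω : Type} [MeasurableSpace Ω] (P : Measure Ω) [IsProbabilityMeasure P]
    (X Y : Ω → ℝ) (Xn Yn : ℕ → Ω → ℝ)
    (hX : Measurable X) (hY : Measurable Y)
    (hXn : ∀ n, Measurable (Xn n)) (hYn : ∀ n, Measurable (Yn n))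
    (hiid : ∀ n, Measure.map (fun ω => (Xn n ω, Yn n ω)) P = Measure.map (fun ω => (X ω, Y ω)) P)
    (hindep : iIndepFun (fun n ω => (Xn n ω, Yn n ω)) P)
    (hXnondeg : ¬ ∃ c : ℝ, P {ω | X ω = c} = 1)
    (hYnondeg : ¬ ∃ c : ℝ, P {ω | Y ω = c} = 1)
    (hsup : P {ω | ∀ M : ℝ, ∃ n, M < ∑ i ∈ Finset.range n, Xn i ω} = 1)
    :
    -- (1): strict convexity of `s ↦ E[e^{tY - sX}]` on `𝓓_t`, and the Minkowski inclusion
    (∀ t : ℝ, (Dset P X Y t).Nonempty →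
      StrictConvexOn ℝ (Dset P X Y t) (fun s => ∫ ω, Real.exp (t * Y ω - s * X ω) ∂P)) ∧
    (∀ t₁ t₂ lam : ℝ, lam ∈ Set.Ioo (0:ℝ) 1 →
      ∀ s₁ ∈ Dset P X Y t₁, ∀ s₂ ∈ Dset P X Y t₂,
        (1 - lam) * s₁ + lam * s₂ ∈ Dset P X Y ((1 - lam) * t₁ + lam * t₂)) ∧
    -- (2): `𝓓_t` is a closed interval, `h(t) > -∞`, and `h(t) ∈ 𝓓_t` whenever `h(t) < ∞`
    (∀ t : ℝ, IsClosed (Dset P X Y t) ∧ (Dset P X Y t).OrdConnected ∧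
      BddBelow (Dset P X Y t) ∧
      ((Dset P X Y t).Nonempty → sInf (Dset P X Y t) ∈ Dset P X Y t)) :=
  Dset_convexity_properties_general P X Y Xn Yn hX hY hiid hsup
end
end
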